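/- For each θ ∈ (0,1) there is a constant C = C(θ) such that for every complex Banach space E and every function f : Ā → E which is continuous on Ā and analytic on Ω, one has ‖f(e^θ)‖_E ≤ C (∫₀^{2π} ‖f(e^{it})‖_E dt/2π)^{1−θ} (∫₀^{2π} ‖f(e^{1+it})‖_E dt/2π)^{θ}. -/

import Mathlib

open MeasureTheory Filter Topology

/-- The closed annulus `Ā = {z : 1 ≤ |z| ≤ e}`. -/
noncomputable def closedAnnulus : Set ℂ :=
  {z : ℂ | 1 ≤ ‖z‖ ∧ ‖z‖ ≤ Real.exp 1}

/-- The open annulus `Ω = {z : 1 < |z| < e}`. -/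
noncomputable def openAnnulus : Set ℂ :=
  {z : ℂ | 1 < ‖z‖ ∧ ‖z‖ < Real.exp 1}

universe u

/-!
For every integer `n`, the Cauchy integral formula on the annulus applied to `z ^ n • f z` at
`w = e^θ` bounds `e^{nθ} ‖f(e^θ)‖` by `a M₀ + e^n b M₁`, where `M₀, M₁` are the means of `‖f‖`
over the two boundary circles and `a = 1 / (e^θ - 1)`, `b = e / (e - e^θ)` come from the distance of
`e^θ` to them. Taking `n = ⌊log (a M₀) - log (b M₁)⌋` balances the two terms and gives the bound
with `C = (e^θ + 1) a^{1-θ} b^θ`; a vanishing mean is handled by perturbing it and letting the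
perturbation tend to `0`.
-/

open Set Metric Complex
open scoped Real
open Real (circleAverage)

theorem le_exp_add_one_mul_rpow_mul_rpow_of_pos {θ x A B : ℝ} (hθ0 : 0 ≤ θ) (hθ1 : θ ≤ 1)
    (hA : 0 < A) (hB : 0 < B) (h : ∀ n : ℤ, Real.exp (n * θ) * x ≤ A + Real.exp n * B) :
    x ≤ (Real.exp θ + 1) * A ^ (1 - θ) * B ^ θ := by
  obtain ⟨a, rfl⟩ : ∃ a, Real.exp a = A := ⟨Real.log A, Real.exp_log hA⟩
  obtain ⟨b, rfl⟩ : ∃ b, Real.exp b = B := ⟨Real.log B, Real.exp_log hB⟩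
  -- the real minimiser of `e^{-nθ} (e^a + e^n e^b)` is `n = a - b`; rounding down costs `e^θ`
  set n := ⌊a - b⌋
  have hn : (n : ℝ) ≤ a - b := Int.floor_le _
  have hn' : a - b - 1 < n := by linarith [Int.lt_floor_add_one (a - b)]
  calc x = Real.exp (-(n * θ)) * (Real.exp (n * θ) * x) := by
        rw [← mul_assoc, ← Real.exp_add, neg_add_cancel, Real.exp_zero, one_mul]
    _ ≤ Real.exp (-(n * θ)) * (Real.exp a + Real.exp n * Real.exp b) := by gcongr; exact h n
    _ = Real.exp (a - n * θ) + Real.exp (b + n * (1 - θ)) := by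
        rw [mul_add, ← Real.exp_add, ← Real.exp_add, ← Real.exp_add]
        congr 2 <;> ring
    _ ≤ Real.exp (θ + (a * (1 - θ) + b * θ)) + Real.exp (a * (1 - θ) + b * θ) := by
        refine add_le_add (Real.exp_le_exp.2 ?_) (Real.exp_le_exp.2 ?_)
        · nlinarith [mul_le_mul_of_nonneg_left hn'.le hθ0]
        · nlinarith [mul_le_mul_of_nonneg_right hn (sub_nonneg.2 hθ1)]
    _ = (Real.exp θ + 1) * Real.exp a ^ (1 - θ) * Real.exp b ^ θ := by
        rw [← Real.exp_mul, ← Real.exp_mul, mul_assoc, ← Real.exp_add, Real.exp_add θ]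
        ring

theorem le_exp_add_one_mul_rpow_mul_rpow {θ x A B : ℝ} (hθ0 : 0 ≤ θ) (hθ1 : θ ≤ 1)
    (hA : 0 ≤ A) (hB : 0 ≤ B) (h : ∀ n : ℤ, Real.exp (n * θ) * x ≤ A + Real.exp n * B) :
    x ≤ (Real.exp θ + 1) * A ^ (1 - θ) * B ^ θ := by
  have hφ : Continuous fun ε : ℝ => (Real.exp θ + 1) * (A + ε) ^ (1 - θ) * (B + ε) ^ θ :=
    (continuous_const.mul ((Real.continuous_rpow_const (sub_nonneg.2 hθ1)).comp
      (continuous_const.add continuous_id))).mul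
      ((Real.continuous_rpow_const hθ0).comp (continuous_const.add continuous_id))
  have hlim := (hφ.tendsto 0).mono_left (nhdsWithin_le_nhds (s := Ioi 0))
  simp only [add_zero] at hlim
  refine ge_of_tendsto hlim (eventually_nhdsWithin_of_forall fun ε (hε : 0 < ε) => ?_)
  refine le_exp_add_one_mul_rpow_mul_rpow_of_pos hθ0 hθ1 (by linarith) (by linarith)
    fun n => (h n).trans ?_
  gcongr <;> linarith

theorem sphere_subset_closedBall_sdiff_ball {c : ℂ} {r ρ R : ℝ} (hrρ : r ≤ ρ) (hρR : ρ ≤ R) :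
    sphere c ρ ⊆ closedBall c R \ ball c r :=
  fun z hz => ⟨(mem_sphere.1 hz).trans_le hρR, by simp [mem_sphere.1 hz, hrρ]⟩

theorem closedAnnulus_eq : closedAnnulus = closedBall 0 (Real.exp 1) \ ball 0 1 := by
  ext z
  simp [closedAnnulus, and_comm]

theorem openAnnulus_eq : openAnnulus = ball 0 (Real.exp 1) \ closedBall 0 1 := by
  ext z
  simp [openAnnulus, and_comm]

theorem circleIntegral_sub_inv_of_notMem_closedBall {c w : ℂ} {r : ℝ} (hr : 0 ≤ r)
    (hw : w ∉ closedBall c r) : (∮ z in C(c, r), (z - w)⁻¹) = 0 := by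
  refine DiffContOnCl.circleIntegral_eq_zero hr (DifferentiableOn.diffContOnCl ?_)
  exact (differentiableOn_id.sub_const w).inv fun z hz =>
    sub_ne_zero.2 (ne_of_mem_of_not_mem (closure_ball_subset_closedBall hz) hw)

section CauchyAnnulus

variable {E : Type*} [NormedAddCommGroup E] [NormedSpace ℂ E]

theorem norm_circleIntegral_sub_inv_smul_le {c w : ℂ} {R d : ℝ} {f : ℂ → E} (hR : 0 ≤ R)
    (hd : 0 < d) (hdist : ∀ z ∈ sphere c R, d ≤ ‖z - w‖) (hf : CircleIntegrable f c R) :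
    ‖∮ z in C(c, R), (z - w)⁻¹ • f z‖ ≤ 2 * π * (R / d) * circleAverage (‖f ·‖) c R := by
  have hπ : 2 * π ≠ 0 := Real.two_pi_pos.ne'
  rw [Real.circleAverage_def, smul_eq_mul, ← mul_assoc, mul_assoc (2 * π), mul_comm (R / d),
    ← mul_assoc, mul_inv_cancel₀ hπ, one_mul, ← intervalIntegral.integral_const_mul,
    circleIntegral]
  refine intervalIntegral.norm_integral_le_of_norm_le Real.two_pi_pos.le
    (Eventually.of_forall fun t _ => ?_) (hf.norm.const_mul _)
  have hz := circleMap_mem_sphere c hR t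
  rw [deriv_circleMap, norm_smul, norm_smul, norm_mul, norm_circleMap_zero, norm_I, mul_one,
    abs_of_nonneg hR, norm_inv, div_eq_mul_inv, mul_assoc]
  gcongr
  exact hdist _ hz

theorem circleAverage_norm_zpow_smul (f : ℂ → E) (n : ℤ) (R : ℝ) :
    circleAverage (fun z => ‖z ^ n • f z‖) 0 R = |R| ^ n * circleAverage (‖f ·‖) 0 R := by
  rw [← smul_eq_mul, ← Real.circleAverage_fun_smul]
  exact Real.circleAverage_congr_sphere fun z hz => by
    simp [norm_smul, norm_zpow, mem_sphere_zero_iff_norm.1 hz]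

variable [CompleteSpace E]

theorem circleIntegral_dslope {c w : ℂ} {ρ : ℝ} {f : ℂ → E} (hρ : 0 ≤ ρ)
    (hw : w ∉ sphere c ρ) (hf : ContinuousOn f (sphere c ρ)) :
    (∮ z in C(c, ρ), dslope f w z) =
      (∮ z in C(c, ρ), (z - w)⁻¹ • f z) - (∮ z in C(c, ρ), (z - w)⁻¹) • f w := by
  have hne : ∀ z ∈ sphere c ρ, z ≠ w := fun z hz => ne_of_mem_of_not_mem hz hw
  have hinv : ContinuousOn (fun z => (z - w)⁻¹) (sphere c ρ) :=
    (continuousOn_id.sub continuousOn_const).inv₀ fun z hz => sub_ne_zero.2 (hne z hz)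
  have hF : EqOn (dslope f w) (fun z => (z - w)⁻¹ • f z - (z - w)⁻¹ • f w) (sphere c ρ) :=
    fun z hz => by rw [dslope_of_ne _ (hne z hz), slope_def_module, smul_sub]
  rw [circleIntegral.integral_congr hρ hF, ← circleIntegral.integral_smul_const]
  exact circleIntegral.integral_sub ((hinv.smul hf).circleIntegrable hρ)
    ((hinv.smul continuousOn_const).circleIntegrable hρ)

theorem circleIntegral_sub_circleIntegral_sub_inv_smul_of_differentiableOn_annulus
    {c w : ℂ} {r R : ℝ} {f : ℂ → E} (hr : 0 < r) (hw : w ∈ ball c R \ closedBall c r)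
    (hc : ContinuousOn f (closedBall c R \ ball c r))
    (hd : DifferentiableOn ℂ f (ball c R \ closedBall c r)) :
    (∮ z in C(c, R), (z - w)⁻¹ • f z) - (∮ z in C(c, r), (z - w)⁻¹ • f z) =
      (2 * π * I : ℂ) • f w := by
  have hrR : r ≤ R := (not_le.1 hw.2).le.trans (mem_ball.1 hw.1).le
  have hopen : IsOpen (ball c R \ closedBall c r) := isOpen_ball.sdiff isClosed_closedBall
  have hnhds : closedBall c R \ ball c r ∈ 𝓝 w := mem_of_superset (hopen.mem_nhds hw)
    (sdiff_subset_sdiff ball_subset_closedBall ball_subset_closedBall)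
  have hcF : ContinuousOn (dslope f w) (closedBall c R \ ball c r) :=
    (continuousOn_dslope hnhds).2 ⟨hc, hd.differentiableAt (hopen.mem_nhds hw)⟩
  have hdF : ∀ z ∈ (ball c R \ closedBall c r) \ {w}, DifferentiableAt ℂ (dslope f w) z :=
    fun z hz => (differentiableAt_dslope_of_ne hz.2).2 (hd.differentiableAt (hopen.mem_nhds hz.1))
  have hwR : w ∉ sphere c R := fun h => (mem_ball.1 hw.1).ne (mem_sphere.1 h)
  have hwr : w ∉ sphere c r := fun h => hw.2 (sphere_subset_closedBall h)
  have key := circleIntegral_eq_of_differentiable_on_annulus_off_countable hr hrR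
    (countable_singleton w) hcF hdF
  rw [circleIntegral_dslope (hr.le.trans hrR) hwR
      (hc.mono (sphere_subset_closedBall_sdiff_ball hrR le_rfl)),
    circleIntegral_dslope hr.le hwr (hc.mono (sphere_subset_closedBall_sdiff_ball le_rfl hrR)),
    circleIntegral.integral_sub_inv_of_mem_ball hw.1,
    circleIntegral_sub_inv_of_notMem_closedBall hr.le hw.2, zero_smul, sub_zero] at key
  rw [← key]
  abel

theorem norm_le_of_differentiableOn_annulus {c w : ℂ} {r R : ℝ} {f : ℂ → E}
    (hr : 0 < r) (hw : w ∈ ball c R \ closedBall c r)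
    (hc : ContinuousOn f (closedBall c R \ ball c r))
    (hd : DifferentiableOn ℂ f (ball c R \ closedBall c r)) :
    ‖f w‖ ≤ R / (R - ‖w - c‖) * circleAverage (‖f ·‖) c R +
      r / (‖w - c‖ - r) * circleAverage (‖f ·‖) c r := by
  have hwR : ‖w - c‖ < R := mem_ball_iff_norm.1 hw.1
  have hwr : r < ‖w - c‖ := not_le.1 (mt mem_closedBall_iff_norm.2 hw.2)
  have hRpos : 0 ≤ R := hr.le.trans (hwr.trans hwR).le
  have hdistR : ∀ z ∈ sphere c R, R - ‖w - c‖ ≤ ‖z - w‖ := fun z hz => by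
    simpa [mem_sphere_iff_norm.1 hz] using norm_sub_norm_le (z - c) (w - c)
  have hdistr : ∀ z ∈ sphere c r, ‖w - c‖ - r ≤ ‖z - w‖ := fun z hz => by
    simpa [mem_sphere_iff_norm.1 hz, norm_sub_rev w z] using norm_sub_norm_le (w - c) (z - c)
  have hrR : r ≤ R := (hwr.trans hwR).le
  have hboundR := norm_circleIntegral_sub_inv_smul_le hRpos (sub_pos.2 hwR) hdistR
    ((hc.mono (sphere_subset_closedBall_sdiff_ball hrR le_rfl)).circleIntegrable hRpos)
  have hboundr := norm_circleIntegral_sub_inv_smul_le hr.le (sub_pos.2 hwr) hdistr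
    ((hc.mono (sphere_subset_closedBall_sdiff_ball le_rfl hrR)).circleIntegrable hr.le)
  refine le_of_mul_le_mul_left ?_ Real.two_pi_pos
  calc 2 * π * ‖f w‖ = ‖(2 * π * I : ℂ) • f w‖ := by
        rw [norm_smul, norm_mul, norm_I, mul_one, norm_mul, Complex.norm_ofNat, Complex.norm_real,
          Real.norm_of_nonneg Real.pi_pos.le]
    _ ≤ ‖∮ z in C(c, R), (z - w)⁻¹ • f z‖ + ‖∮ z in C(c, r), (z - w)⁻¹ • f z‖ := by
        rw [← circleIntegral_sub_circleIntegral_sub_inv_smul_of_differentiableOn_annulus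
          hr hw hc hd]
        exact norm_sub_le _ _
    _ ≤ _ := by linarith

theorem zpow_mul_norm_le_of_differentiableOn_annulus {w : ℂ} {r R : ℝ} {f : ℂ → E} (n : ℤ)
    (hr : 0 < r) (hw : w ∈ ball 0 R \ closedBall 0 r)
    (hc : ContinuousOn f (closedBall 0 R \ ball 0 r))
    (hd : DifferentiableOn ℂ f (ball 0 R \ closedBall 0 r)) :
    ‖w‖ ^ n * ‖f w‖ ≤ R / (R - ‖w‖) * (R ^ n * circleAverage (‖f ·‖) 0 R) +
      r / (‖w‖ - r) * (r ^ n * circleAverage (‖f ·‖) 0 r) := by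
  have hR : 0 < R := hr.trans_le ((not_le.1 (mt mem_closedBall_zero_iff.2 hw.2)).le.trans
    (mem_ball_zero_iff.1 hw.1).le)
  have hc' : ContinuousOn (fun z => z ^ n • f z) (closedBall 0 R \ ball 0 r) :=
    (continuousOn_id.zpow₀ n fun z hz =>
      Or.inl (ne_of_mem_of_not_mem hz fun h => h.2 (mem_ball_self hr))).smul hc
  have hd' : DifferentiableOn ℂ (fun z => z ^ n • f z) (ball 0 R \ closedBall 0 r) :=
    (differentiableOn_zpow n _ (Or.inl fun h => h.2 (mem_closedBall_self hr.le))).smul hd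
  have key := norm_le_of_differentiableOn_annulus hr hw hc' hd'
  rwa [circleAverage_norm_zpow_smul, circleAverage_norm_zpow_smul, sub_zero, norm_smul, norm_zpow,
    abs_of_pos hr, abs_of_pos hR] at key

theorem exp_int_mul_mul_norm_le_of_annulus {θ : ℝ} {f : ℂ → E} (hθ0 : 0 < θ) (hθ1 : θ < 1)
    (hc : ContinuousOn f closedAnnulus) (hd : DifferentiableOn ℂ f openAnnulus) (n : ℤ) :
    Real.exp (n * θ) * ‖f (Real.exp θ)‖ ≤
      (Real.exp θ - 1)⁻¹ * circleAverage (‖f ·‖) 0 1 +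
        Real.exp n * (Real.exp 1 / (Real.exp 1 - Real.exp θ) *
          circleAverage (‖f ·‖) 0 (Real.exp 1)) := by
  have hw : ((Real.exp θ : ℝ) : ℂ) ∈ ball 0 (Real.exp 1) \ closedBall 0 1 := by
    simp [hθ0, Real.exp_lt_exp.2 hθ1]
  rw [closedAnnulus_eq] at hc
  rw [openAnnulus_eq] at hd
  have key := zpow_mul_norm_le_of_differentiableOn_annulus n one_pos hw hc hd
  rw [Complex.norm_real, Real.norm_of_nonneg (Real.exp_pos θ).le, one_zpow, one_mul,
    ← Real.rpow_intCast, ← Real.rpow_intCast, ← Real.exp_mul, ← Real.exp_mul, one_mul,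
    mul_comm θ] at key
  exact key.trans_eq (by ring)

end CauchyAnnulus

theorem stmt14 (θ : ℝ) (hθ0 : 0 < θ) (hθ1 : θ < 1) :
    ∃ C : ℝ, ∀ (E : Type u) [NormedAddCommGroup E] [NormedSpace ℂ E] [CompleteSpace E],
      ∀ f : ℂ → E,
        ContinuousOn f closedAnnulus → DifferentiableOn ℂ f openAnnulus →
        ‖f ((Real.exp θ : ℝ) : ℂ)‖ ≤
          C * ((2 * Real.pi)⁻¹ *
                ∫ t in (0:ℝ)..(2 * Real.pi), ‖f (Complex.exp (Complex.I * t))‖) ^ (1 - θ) *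
            ((2 * Real.pi)⁻¹ *
                ∫ t in (0:ℝ)..(2 * Real.pi), ‖f (Complex.exp (1 + Complex.I * t))‖) ^ θ := by
  set a := (Real.exp θ - 1)⁻¹
  set b := Real.exp 1 / (Real.exp 1 - Real.exp θ)
  have ha : 0 ≤ a := inv_nonneg.2 (sub_nonneg.2 (Real.one_lt_exp_iff.2 hθ0).le)
  have hb : 0 ≤ b := div_nonneg (Real.exp_pos 1).le (sub_nonneg.2 (Real.exp_lt_exp.2 hθ1).le)
  refine ⟨(Real.exp θ + 1) * a ^ (1 - θ) * b ^ θ, fun E _ _ _ f hc hd => ?_⟩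
  have hM₀ : circleAverage (‖f ·‖) 0 1 =
      (2 * π)⁻¹ * ∫ t in (0:ℝ)..(2 * π), ‖f (Complex.exp (Complex.I * t))‖ := by
    simp [Real.circleAverage_def, circleMap, mul_comm]
  have hM₁ : circleAverage (‖f ·‖) 0 (Real.exp 1) =
      (2 * π)⁻¹ * ∫ t in (0:ℝ)..(2 * π), ‖f (Complex.exp (1 + Complex.I * t))‖ := by
    simp [Real.circleAverage_def, circleMap, mul_comm, Complex.exp_add]
  have hM : ∀ ρ, 0 ≤ circleAverage (‖f ·‖) 0 ρ :=
    fun ρ => Real.circleAverage_nonneg_of_nonneg fun _ _ => norm_nonneg _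
  have h := le_exp_add_one_mul_rpow_mul_rpow hθ0.le hθ1.le (mul_nonneg ha (hM 1))
    (mul_nonneg hb (hM _)) (exp_int_mul_mul_norm_le_of_annulus hθ0 hθ1 hc hd)
  rw [Real.mul_rpow ha (hM 1), Real.mul_rpow hb (hM _), hM₀, hM₁] at h
  exact h.trans_eq (by ring)
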